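/- Let M ≥ 1, C > 0, D > 0, fix m₀ ∈ {1,…,M}, and let λ_a, λ_b ∈ ℝ^M with 0 < λ_b(m) ≤ D for all m. Let λ₀ be a real number and Δ > 0, and for t > 0 let λ_a[t] denote the vector λ_a with its m₀-th entry replaced by t; set p(t) = Q(G(λ_a[t], λ_b)). Assume that for every t ∈ (λ₀ − Δ, λ₀ + Δ): 0 < t ≤ D, 0 < λ_a[t](m) ≤ D for all m, and Σ_{m=1}^M (λ_a[t](m) − λ_b(m))² ≥ C; and assume λ₀ ∈ (λ₀ − Δ, λ₀ + Δ) satisfies these constraints as well. Then for every t ∈ (λ₀ − Δ, λ₀ + Δ), |p(t) − p(λ₀)| ≤ ( 3 e^{−C/(8D)} / √(2π C/D) ) · Δ. -/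

import Mathlib

open Real MeasureTheory

/-- The Gaussian tail function `Q(t) = ∫_t^∞ (1/√(2π)) e^{−x²/2} dx`. -/
noncomputable def gaussQ (t : ℝ) : ℝ :=
  ∫ x in Set.Ici t, (1 / Real.sqrt (2 * π)) * Real.exp (-x ^ 2 / 2)

/-- `G(λ_a, λ_b) = √(∑ (λ_a(m)−λ_b(m))²/(2(λ_a(m)+λ_b(m))))`. -/
noncomputable def Gfun {M : ℕ} (lam_a lam_b : Fin M → ℝ) : ℝ :=
  Real.sqrt (∑ m : Fin M, (lam_a m - lam_b m) ^ 2 / (2 * (lam_a m + lam_b m)))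

/-
Q is Lipschitz with constant φ(s) on [s, ∞) for s ≥ 0, since the standard normal density φ
decreases there. Changing the m₀-th entry of λ_a changes only one summand
(x - b)²/(2(x + b)) of G², which is 3/2-Lipschitz in x ≥ 0; and the separation and power
constraints give G² ≥ C/(4D), so √ is 1/(2√(C/(4D)))-Lipschitz on the relevant range.
Composing the three bounds gives half the claimed constant.
-/

open Set Function

noncomputable def gaussPDF (x : ℝ) : ℝ := 1 / √(2 * π) * exp (-x ^ 2 / 2)

lemma gaussPDF_nonneg (x : ℝ) : 0 ≤ gaussPDF x := by
  unfold gaussPDF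
  positivity

lemma gaussPDF_le_of_le {s x : ℝ} (hs : 0 ≤ s) (hsx : s ≤ x) : gaussPDF x ≤ gaussPDF s := by
  unfold gaussPDF
  gcongr

lemma integrable_gaussPDF : Integrable gaussPDF := by
  convert (integrable_exp_neg_mul_sq (b := 1 / 2) (by norm_num)).const_mul (1 / √(2 * π))
    using 1
  ext x
  rw [gaussPDF]
  ring_nf

lemma gaussQ_sub_gaussQ (a b : ℝ) : gaussQ a - gaussQ b = ∫ x in a..b, gaussPDF x :=
  intervalIntegral.integral_Ici_sub_Ici' integrable_gaussPDF.integrableOn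
    integrable_gaussPDF.integrableOn

lemma abs_gaussQ_sub_gaussQ_le {s a b : ℝ} (hs : 0 ≤ s) (ha : s ≤ a) (hb : s ≤ b) :
    |gaussQ a - gaussQ b| ≤ gaussPDF s * |a - b| := by
  rw [gaussQ_sub_gaussQ, abs_sub_comm a b]
  refine intervalIntegral.norm_integral_le_of_norm_le_const (f := gaussPDF) fun x hx => ?_
  rw [Real.norm_of_nonneg (gaussPDF_nonneg x)]
  exact gaussPDF_le_of_le hs ((le_min ha hb).trans hx.1.le)

lemma abs_sqrt_sub_sqrt_le {l x y : ℝ} (hl : 0 < l) (hx : l ≤ √x) (hy : l ≤ √y) :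
    |√x - √y| ≤ |x - y| / (2 * l) := by
  have hx0 : 0 ≤ x := sqrt_pos.1 (hl.trans_le hx) |>.le
  have hy0 : 0 ≤ y := sqrt_pos.1 (hl.trans_le hy) |>.le
  have hfactor : x - y = (√x - √y) * (√x + √y) := by
    linear_combination sq_sqrt hy0 - sq_sqrt hx0
  rw [le_div_iff₀ (by positivity), hfactor, abs_mul,
    abs_of_pos (add_pos (hl.trans_le hx) (hl.trans_le hy))]
  gcongr
  linarith

lemma abs_sub_sq_div_add_sub_le {b x y : ℝ} (hb : 0 < b) (hx : 0 ≤ x) (hy : 0 ≤ y) :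
    |(x - b) ^ 2 / (2 * (x + b)) - (y - b) ^ 2 / (2 * (y + b))| ≤ 3 / 2 * |x - y| := by
  have hxb : 0 < x + b := by linarith
  have hyb : 0 < y + b := by linarith
  set c := 2 * b ^ 2 / ((x + b) * (y + b)) with hc
  have hc0 : 0 ≤ c := by positivity
  have hc2 : c ≤ 2 := by
    rw [hc, div_le_iff₀ (by positivity)]
    nlinarith
  -- (x - b)²/(2(x + b)) = (x + b)/2 - 2b + 2b²/(x + b)
  have hdiff : (x - b) ^ 2 / (2 * (x + b)) - (y - b) ^ 2 / (2 * (y + b))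
      = (1 / 2 - c) * (x - y) := by
    rw [hc]
    field_simp
    ring
  rw [hdiff, abs_mul]
  gcongr
  rw [abs_le]
  constructor <;> linarith

lemma sum_apply_update_sub_sum_apply_update {ι α G : Type*} [Fintype ι] [DecidableEq ι]
    [AddCommGroup G] (g : ι → α → G) (v : ι → α) (i : ι) (s t : α) :
    ∑ m, g m (update v i s m) - ∑ m, g m (update v i t m) = g i s - g i t := by
  rw [← Finset.sum_sub_distrib,
    Finset.sum_eq_single i (fun m _ hm => by simp [update_of_ne hm]) (by simp)]
  simp

lemma sqrt_div_le_Gfun {M : ℕ} {C D : ℝ} {a b : Fin M → ℝ} (hD : 0 < D)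
    (ha : ∀ m, 0 < a m ∧ a m ≤ D) (hb : ∀ m, 0 < b m ∧ b m ≤ D)
    (hC : C ≤ ∑ m, (a m - b m) ^ 2) : √(C / (4 * D)) ≤ Gfun a b := by
  refine sqrt_le_sqrt ?_
  calc C / (4 * D) ≤ (∑ m, (a m - b m) ^ 2) / (4 * D) := by gcongr
    _ = ∑ m, (a m - b m) ^ 2 / (4 * D) := Finset.sum_div _ _ _
    _ ≤ ∑ m, (a m - b m) ^ 2 / (2 * (a m + b m)) := by
      refine Finset.sum_le_sum fun m _ => ?_
      obtain ⟨ha₀, haD⟩ := ha m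
      obtain ⟨hb₀, hbD⟩ := hb m
      exact div_le_div_of_nonneg_left (sq_nonneg _) (by positivity) (by linarith)

lemma abs_Gfun_update_sub_le {M : ℕ} {l s t : ℝ} {a b : Fin M → ℝ} (i : Fin M)
    (hl : 0 < l) (hbi : 0 < b i) (hs : 0 ≤ s) (ht : 0 ≤ t)
    (hGs : l ≤ Gfun (update a i s) b) (hGt : l ≤ Gfun (update a i t) b) :
    |Gfun (update a i s) b - Gfun (update a i t) b| ≤ 3 / 2 * |s - t| / (2 * l) := by
  refine (abs_sqrt_sub_sqrt_le hl hGs hGt).trans ?_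
  rw [sum_apply_update_sub_sum_apply_update (fun m x => (x - b m) ^ 2 / (2 * (x + b m)))]
  gcongr
  simpa using abs_sub_sq_div_add_sub_le hbi hs ht

lemma gaussPDF_div_eq {C D : ℝ} (hC : 0 < C) (hD : 0 < D) :
    gaussPDF √(C / (4 * D)) / (2 * √(C / (4 * D))) = exp (-C / (8 * D)) / √(2 * π * C / D) := by
  have hsq : (√(C / (4 * D))) ^ 2 = C / (4 * D) := sq_sqrt (by positivity)
  have hroot : √(2 * π * C / D) = 2 * √(C / (4 * D)) * √(2 * π) := by
    rw [← sqrt_sq (by positivity : 0 ≤ 2 * √(C / (4 * D)) * √(2 * π)), mul_pow, mul_pow, hsq,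
      sq_sqrt (by positivity)]
    congr 1
    field_simp
    ring
  rw [hroot, gaussPDF, hsq]
  field_simp
  ring_nf

theorem stmt16_general (M : ℕ) (C D : ℝ) (hC : 0 < C) (hD : 0 < D)
    (m₀ : Fin M) (lam_a lam_b : Fin M → ℝ)
    (hb : ∀ m, 0 < lam_b m ∧ lam_b m ≤ D)
    (lam₀ Δ : ℝ) (hΔ : 0 < Δ)
    (p : ℝ → ℝ)
    (hp : ∀ t : ℝ, p t = gaussQ (Gfun (Function.update lam_a m₀ t) lam_b))
    (hconstr : ∀ t ∈ Set.Ioo (lam₀ - Δ) (lam₀ + Δ),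
      (0 < t ∧ t ≤ D)
      ∧ (∀ m, 0 < Function.update lam_a m₀ t m
            ∧ Function.update lam_a m₀ t m ≤ D)
      ∧ C ≤ ∑ m : Fin M, (Function.update lam_a m₀ t m - lam_b m) ^ 2)
    (hlam₀ : lam₀ ∈ Set.Ioo (lam₀ - Δ) (lam₀ + Δ)) :
    ∀ t ∈ Set.Ioo (lam₀ - Δ) (lam₀ + Δ),
      |p t - p lam₀|
        ≤ (3 * Real.exp (-C / (8 * D)) / Real.sqrt (2 * π * C / D)) * Δ := by
  intro t ht
  set s₀ := √(C / (4 * D))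
  have hs₀ : 0 < s₀ := sqrt_pos.2 (by positivity)
  have hG : ∀ u ∈ Ioo (lam₀ - Δ) (lam₀ + Δ), s₀ ≤ Gfun (update lam_a m₀ u) lam_b :=
    fun u hu => sqrt_div_le_Gfun hD (hconstr u hu).2.1 hb (hconstr u hu).2.2
  have hGdiff := abs_Gfun_update_sub_le m₀ hs₀ (hb m₀).1 (hconstr t ht).1.1.le
    (hconstr lam₀ hlam₀).1.1.le (hG t ht) (hG lam₀ hlam₀)
  have htΔ : |t - lam₀| ≤ Δ := (abs_sub_lt_iff.2 ⟨by linarith [ht.2], by linarith [ht.1]⟩).le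
  rw [hp, hp]
  calc _ ≤ gaussPDF s₀ * |Gfun (update lam_a m₀ t) lam_b - Gfun (update lam_a m₀ lam₀) lam_b| :=
        abs_gaussQ_sub_gaussQ_le hs₀.le (hG t ht) (hG lam₀ hlam₀)
    _ ≤ gaussPDF s₀ * (3 / 2 * Δ / (2 * s₀)) := by
        gcongr
        · exact gaussPDF_nonneg s₀
        · exact hGdiff.trans (by gcongr)
    _ = 3 / 2 * (exp (-C / (8 * D)) / √(2 * π * C / D)) * Δ := by
        rw [← gaussPDF_div_eq hC hD]
        ring
    _ ≤ _ := by
        rw [mul_div_assoc 3]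
        gcongr
        norm_num

/-- sensitivity of the threshold-detection error probability
`p(t) = Q(G(λ_a[t], λ_b))` to the imperfectly estimated channel parameter:
under the power constraint (all entries in `(0, D]`) and separation
constraint (`∑ (λ_a[t](m)−λ_b(m))² ≥ C`) throughout `(λ₀−Δ, λ₀+Δ)`,
`|p(t) − p(λ₀)| ≤ (3 e^{−C/(8D)}/√(2πC/D)) Δ` for all `t ∈ (λ₀−Δ, λ₀+Δ)`. -/
theorem stmt16 (M : ℕ) (hM : 1 ≤ M) (C D : ℝ) (hC : 0 < C) (hD : 0 < D)
    (m₀ : Fin M) (lam_a lam_b : Fin M → ℝ)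
    (hb : ∀ m, 0 < lam_b m ∧ lam_b m ≤ D)
    (lam₀ Δ : ℝ) (hΔ : 0 < Δ)
    (p : ℝ → ℝ)
    (hp : ∀ t : ℝ, p t = gaussQ (Gfun (Function.update lam_a m₀ t) lam_b))
    (hconstr : ∀ t ∈ Set.Ioo (lam₀ - Δ) (lam₀ + Δ),
      (0 < t ∧ t ≤ D)
      ∧ (∀ m, 0 < Function.update lam_a m₀ t m
            ∧ Function.update lam_a m₀ t m ≤ D)
      ∧ C ≤ ∑ m : Fin M, (Function.update lam_a m₀ t m - lam_b m) ^ 2)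
    (hlam₀ : lam₀ ∈ Set.Ioo (lam₀ - Δ) (lam₀ + Δ)) :
    ∀ t ∈ Set.Ioo (lam₀ - Δ) (lam₀ + Δ),
      |p t - p lam₀|
        ≤ (3 * Real.exp (-C / (8 * D)) / Real.sqrt (2 * π * C / D)) * Δ :=
  stmt16_general M C D hC hD m₀ lam_a lam_b hb lam₀ Δ hΔ p hp hconstr hlam₀
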